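/- arXiv:2408.09068 — 8 statements merged into one kernel-verified Lean document; each statement's English description precedes it below -/
import Mathlib

section
/- Every LP-feasible solution (z, y) of the relaxed Formulation 2 has objective value ∑_{q} ∑_{h ∈ H} z q h ≥ 1, and there exists an LP-feasible solution whose objective value is exactly 1; that is, 1 is the least element of the set of objective values of LP-feasible solutions of Formulation 2. (Proposition 1: the optimal value of the linear programming relaxation of Formulation 2 is 1.) -/
/-- LP-feasibility for the relaxed Formulation 2 (fixed-length SF BILP). -/
def Form2LPFeasible (n p M : ℕ) (D : Fin n → ℕ) (adj : Fin n → Fin n → Prop)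
    (z : Fin p → ℕ → ℝ) (y : Fin p → ℕ → Fin n → ℝ) : Prop :=
  (∀ q : Fin p, ∀ h ∈ Finset.Icc 1 M, 0 ≤ z q h ∧ z q h ≤ 1) ∧
  (∀ q : Fin p, ∀ h ∈ Finset.Icc 1 M, ∀ b : Fin n, 0 ≤ y q h b ∧ y q h b ≤ 1) ∧
  -- (i) logic constraint
  (∀ q : Fin p, ∀ h ∈ Finset.Icc 1 M, ∀ b : Fin n, y q h b ≤ z q h) ∧
  -- (ii) one dwell time per pattern
  (∀ q : Fin p, ∑ h ∈ Finset.Icc 1 M, z q h ≤ 1) ∧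
  -- (iii) demand constraint
  (∀ b : Fin n, ∑ q : Fin p, ∑ h ∈ Finset.Icc 1 M, (h : ℝ) * y q h b = (D b : ℝ)) ∧
  -- (iv) adjacent-beam interference
  (∀ q : Fin p, ∀ h ∈ Finset.Icc 1 M, ∀ b b' : Fin n, adj b b' → y q h b + y q h b' ≤ 1)

/-!
Lower bound: every weight is at most `M`, so by (i) the demand row of a beam with demand `M`
gives `M = ∑ h * y ≤ M * ∑ z`. Optimality: spread the top weight `M` evenly over all `p ≥ 2`
patterns, `z q M = 1 / p`, and serve beam `b` with the fraction `y q M b = (D b / M) * z q M`;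
then every pattern carries at most `1 / p ≤ 1 / 2`, which is what makes (iv) hold for any
adjacency relation.
-/

open Finset

section LowerBound

variable {n p M : ℕ} {D : Fin n → ℕ} {adj : Fin n → Fin n → Prop}
  {z : Fin p → ℕ → ℝ} {y : Fin p → ℕ → Fin n → ℝ}

theorem Form2LPFeasible.demand_le_mul_objective (hfeas : Form2LPFeasible n p M D adj z y)
    (b : Fin n) : (D b : ℝ) ≤ M * ∑ q, ∑ h ∈ Icc 1 M, z q h := by
  obtain ⟨-, hy, hyz, -, hdemand, -⟩ := hfeas
  calc (D b : ℝ) = ∑ q, ∑ h ∈ Icc 1 M, (h : ℝ) * y q h b := (hdemand b).symm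
    _ ≤ ∑ q, ∑ h ∈ Icc 1 M, (M : ℝ) * z q h := by
      gcongr with q _ h hh
      · exact (hy q h hh b).1
      · exact_mod_cast (mem_Icc.1 hh).2
      · exact hyz q h hh b
    _ = M * ∑ q, ∑ h ∈ Icc 1 M, z q h := by simp only [mul_sum]

theorem Form2LPFeasible.one_le_objective (hfeas : Form2LPFeasible n p M D adj z y)
    (hM : 1 ≤ M) {b : Fin n} (hb : D b = M) : 1 ≤ ∑ q, ∑ h ∈ Icc 1 M, z q h := by
  have hM₀ : (0 : ℝ) < M := by exact_mod_cast hM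
  have := hfeas.demand_le_mul_objective b
  rw [hb] at this
  nlinarith

end LowerBound

section EvenSplit

variable {n : ℕ} (p M : ℕ)

noncomputable def evenSplitZ : Fin p → ℕ → ℝ :=
  fun _ h => if h = M then (p : ℝ)⁻¹ else 0

noncomputable def evenSplitY (D : Fin n → ℕ) : Fin p → ℕ → Fin n → ℝ :=
  fun q h b => D b / M * evenSplitZ p M q h

variable {p M}

theorem evenSplitZ_nonneg (q : Fin p) (h : ℕ) : 0 ≤ evenSplitZ p M q h := by
  unfold evenSplitZ; split_ifs <;> positivity

theorem evenSplitZ_le_half (hp : 2 ≤ p) (q : Fin p) (h : ℕ) : evenSplitZ p M q h ≤ 1 / 2 := by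
  have hp' : (2 : ℝ) ≤ p := by exact_mod_cast hp
  unfold evenSplitZ
  split_ifs
  · rw [one_div]; exact inv_anti₀ two_pos hp'
  · norm_num

theorem sum_Icc_mul_evenSplitZ (hM : 1 ≤ M) (f : ℕ → ℝ) (q : Fin p) :
    ∑ h ∈ Icc 1 M, f h * evenSplitZ p M q h = f M / p := by
  simp only [evenSplitZ, mul_ite, mul_zero]
  rw [sum_ite_eq' (Icc 1 M) M, if_pos (mem_Icc.2 ⟨hM, le_rfl⟩), div_eq_mul_inv]

theorem sum_Icc_evenSplitZ (hM : 1 ≤ M) (q : Fin p) :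
    ∑ h ∈ Icc 1 M, evenSplitZ p M q h = (p : ℝ)⁻¹ := by
  simpa using sum_Icc_mul_evenSplitZ hM 1 q

theorem objective_evenSplitZ (hp : p ≠ 0) (hM : 1 ≤ M) :
    ∑ q, ∑ h ∈ Icc 1 M, evenSplitZ p M q h = 1 := by
  have hp' : (p : ℝ) ≠ 0 := by exact_mod_cast hp
  simp only [sum_Icc_evenSplitZ hM, sum_const, card_univ, Fintype.card_fin, nsmul_eq_mul]
  field_simp

theorem form2LPFeasible_evenSplit (hp : 2 ≤ p) (hM : 1 ≤ M) {D : Fin n → ℕ}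
    (hD : ∀ b, D b ≤ M) (adj : Fin n → Fin n → Prop) :
    Form2LPFeasible n p M D adj (evenSplitZ p M) (evenSplitY p M D) := by
  have hM₀ : (0 : ℝ) < M := by exact_mod_cast hM
  have hfrac : ∀ b, 0 ≤ (D b : ℝ) / M ∧ (D b : ℝ) / M ≤ 1 := fun b =>
    ⟨by positivity, (div_le_one hM₀).2 (by exact_mod_cast hD b)⟩
  have hz_half := evenSplitZ_le_half (M := M) hp
  have hy_le_z : ∀ q h b, evenSplitY p M D q h b ≤ evenSplitZ p M q h := fun q h b =>
    mul_le_of_le_one_left (evenSplitZ_nonneg q h) (hfrac b).2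
  have hy_nonneg : ∀ q h b, 0 ≤ evenSplitY p M D q h b := fun q h b =>
    mul_nonneg (hfrac b).1 (evenSplitZ_nonneg q h)
  refine ⟨fun q h _ => ⟨evenSplitZ_nonneg q h, by linarith [hz_half q h]⟩,
    fun q h _ b => ⟨hy_nonneg q h b, by linarith [hy_le_z q h b, hz_half q h]⟩,
    fun q h _ b => hy_le_z q h b, fun q => ?_, fun b => ?_,
    fun q h _ b b' _ => by linarith [hy_le_z q h b, hy_le_z q h b', hz_half q h]⟩
  · have hp₁ : (1 : ℝ) ≤ p := by exact_mod_cast (by omega : 1 ≤ p)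
    rw [sum_Icc_evenSplitZ hM]
    exact inv_le_one_of_one_le₀ hp₁
  · have hp' : (p : ℝ) ≠ 0 := by positivity
    simp_rw [evenSplitY, ← mul_assoc, sum_Icc_mul_evenSplitZ hM, sum_const, card_univ,
      Fintype.card_fin, nsmul_eq_mul]
    field_simp

end EvenSplit

theorem form2_LP_relaxation_optimal_value_one_general
    (n p M : ℕ) (hp : 2 ≤ p) (hM : 1 ≤ M)
    (D : Fin n → ℕ) (hD : ∀ b, D b ≤ M) (hmax : ∃ bstar : Fin n, D bstar = M)
    (adj : Fin n → Fin n → Prop) :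
    IsLeast
      { v : ℝ | ∃ (z : Fin p → ℕ → ℝ) (y : Fin p → ℕ → Fin n → ℝ),
          Form2LPFeasible n p M D adj z y ∧
          v = ∑ q : Fin p, ∑ h ∈ Finset.Icc 1 M, z q h }
      1 := by
  refine ⟨⟨evenSplitZ p M, evenSplitY p M D, form2LPFeasible_evenSplit hp hM hD adj,
    (objective_evenSplitZ (by omega) hM).symm⟩, ?_⟩
  rintro v ⟨z, y, hfeas, rfl⟩
  obtain ⟨bstar, hbstar⟩ := hmax
  exact hfeas.one_le_objective hM hbstar

/-- Proposition 1: the optimal value of the LP relaxation of Formulation 2 is 1. -/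
theorem form2_LP_relaxation_optimal_value_one
    (n p M : ℕ) (hn : 1 ≤ n) (hp : 2 ≤ p) (hM : 1 ≤ M)
    (D : Fin n → ℕ) (hD : ∀ b, D b ≤ M) (hmax : ∃ bstar : Fin n, D bstar = M)
    (adj : Fin n → Fin n → Prop) (hadjSymm : Symmetric adj) (hadjIrrefl : Irreflexive adj) :
    IsLeast
      { v : ℝ | ∃ (z : Fin p → ℕ → ℝ) (y : Fin p → ℕ → Fin n → ℝ),
          Form2LPFeasible n p M D adj z y ∧
          v = ∑ q : Fin p, ∑ h ∈ Finset.Icc 1 M, z q h }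
      1 :=
  form2_LP_relaxation_optimal_value_one_general n p M hp hM D hD hmax adj
end

section
/- Assume additionally that there exists a beam b with D b ≥ 1. Then every LP-feasible solution (z, y, T, x) of the relaxed Formulation 3 has objective value ∑_q z q ≥ 1, and there exists an LP-feasible solution whose objective value is exactly 1; that is, 1 is the least element of the set of objective values of LP-feasible solutions of Formulation 3. (Proposition 2: the optimal value of the linear programming relaxation of Formulation 3 is 1.) -/
/-- LP-feasibility for the relaxed Formulation 3 (flexible-length SF MILP). -/
def Form3LPFeasible (n p M : ℕ) (D : Fin n → ℕ) (adj : Fin n → Fin n → Prop)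
    (z : Fin p → ℝ) (y : Fin p → Fin n → ℝ) (T : Fin p → ℝ) (x : Fin p → Fin n → ℝ) : Prop :=
  (∀ q : Fin p, 0 ≤ z q ∧ z q ≤ 1) ∧
  (∀ q : Fin p, ∀ b : Fin n, 0 ≤ y q b ∧ y q b ≤ 1) ∧
  (∀ q : Fin p, 0 ≤ T q) ∧
  (∀ q : Fin p, ∀ b : Fin n, 0 ≤ x q b) ∧
  -- (i) logic constraint
  (∀ q : Fin p, ∀ b : Fin n, y q b ≤ z q) ∧
  -- (ii) logic constraint on durations
  (∀ q : Fin p, ∀ b : Fin n, x q b ≤ (D b : ℝ) * y q b) ∧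
  -- (iii) demand constraint
  (∀ b : Fin n, ∑ q : Fin p, x q b = (D b : ℝ)) ∧
  -- (iv) and (v): equal dwell time within a pattern
  (∀ q : Fin p, ∀ b : Fin n, x q b ≤ T q + (M : ℝ) * (1 - y q b)) ∧
  (∀ q : Fin p, ∀ b : Fin n, T q - (M : ℝ) * (1 - y q b) ≤ x q b) ∧
  -- (vi) adjacent-beam interference
  (∀ q : Fin p, ∀ b b' : Fin n, adj b b' → y q b + y q b' ≤ 1)

/-- Integer feasibility for Formulation 3: LP-feasible with binary `z` and `y`. -/
def Form3IntFeasible (n p M : ℕ) (D : Fin n → ℕ) (adj : Fin n → Fin n → Prop)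
    (z : Fin p → ℝ) (y : Fin p → Fin n → ℝ) (T : Fin p → ℝ) (x : Fin p → Fin n → ℝ) : Prop :=
  Form3LPFeasible n p M D adj z y T x ∧
  (∀ q : Fin p, z q = 0 ∨ z q = 1) ∧
  (∀ q : Fin p, ∀ b : Fin n, y q b = 0 ∨ y q b = 1)

/-!
Constraints (i)–(iii) give `D b = ∑_q x q b ≤ D b · ∑_q z q` for every beam, so one beam with
positive demand forces `∑_q z q ≥ 1`. Conversely, spreading every beam evenly over all `p`
patterns (`z q = y q b = 1/p`, `x q b = D b / p`, `T q = 0`) is feasible once `p ≥ 2`: the big-`M`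
constraints then have slack `M (1 - 1/p) ≥ M / p ≥ D b / p`, and `y q b + y q b' = 2/p ≤ 1`.
-/

open Finset

namespace Form3LPFeasible

variable {n p M : ℕ} {D : Fin n → ℕ} {adj : Fin n → Fin n → Prop} {z : Fin p → ℝ}
  {y : Fin p → Fin n → ℝ} {T : Fin p → ℝ} {x : Fin p → Fin n → ℝ}

theorem demand_le_mul_sum (h : Form3LPFeasible n p M D adj z y T x) (b : Fin n) :
    (D b : ℝ) ≤ D b * ∑ q, z q := by
  obtain ⟨-, -, -, -, hyz, hxy, hdemand, -⟩ := h
  calc (D b : ℝ) = ∑ q, x q b := (hdemand b).symm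
    _ ≤ ∑ q, (D b : ℝ) * z q :=
        sum_le_sum fun q _ => (hxy q b).trans (by gcongr; exact hyz q b)
    _ = D b * ∑ q, z q := (mul_sum ..).symm

theorem one_le_sum (h : Form3LPFeasible n p M D adj z y T x) {b : Fin n} (hb : 1 ≤ D b) :
    1 ≤ ∑ q, z q := by
  have hb' : (0 : ℝ) < D b := by exact_mod_cast hb
  exact (le_mul_iff_one_le_right hb').1 (h.demand_le_mul_sum b)

end Form3LPFeasible

theorem sum_fin_mul_inv_card {p : ℕ} (hp : p ≠ 0) (c : ℝ) :
    ∑ _q : Fin p, c * (p : ℝ)⁻¹ = c := by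
  rw [sum_const, card_univ, Fintype.card_fin, nsmul_eq_mul]
  field_simp

theorem form3LPFeasible_uniform {n p M : ℕ} (hp : 2 ≤ p) {D : Fin n → ℕ} (hD : ∀ b, D b ≤ M)
    (adj : Fin n → Fin n → Prop) :
    Form3LPFeasible n p M D adj (fun _ => (p : ℝ)⁻¹) (fun _ _ => (p : ℝ)⁻¹) (fun _ => 0)
      (fun _ b => D b * (p : ℝ)⁻¹) := by
  have ht0 : 0 < (p : ℝ)⁻¹ := by positivity
  have ht : (p : ℝ)⁻¹ ≤ 1 / 2 := by
    rw [one_div]; exact inv_anti₀ two_pos (by exact_mod_cast hp)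
  refine ⟨fun _ => ⟨ht0.le, by linarith⟩, fun _ _ => ⟨ht0.le, by linarith⟩, fun _ => le_rfl,
    fun _ b => by positivity, fun _ _ => le_rfl, fun _ _ => le_rfl,
    fun b => sum_fin_mul_inv_card (by omega) _, fun _ b => ?_, fun _ b => ?_,
    fun _ _ _ _ => by linarith⟩
  · calc (D b : ℝ) * (p : ℝ)⁻¹ ≤ M * (p : ℝ)⁻¹ := by gcongr; exact hD b
      _ ≤ 0 + M * (1 - (p : ℝ)⁻¹) := by nlinarith [M.cast_nonneg (α := ℝ)]
  · have hslack : (0 : ℝ) ≤ M * (1 - (p : ℝ)⁻¹) := mul_nonneg M.cast_nonneg (by linarith)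
    linarith [show (0 : ℝ) ≤ D b * (p : ℝ)⁻¹ by positivity]

theorem form3_LP_relaxation_optimal_value_one_general
    (n p M : ℕ) (hp : 2 ≤ p)
    (D : Fin n → ℕ) (hD : ∀ b, D b ≤ M) (hpos : ∃ b : Fin n, 1 ≤ D b)
    (adj : Fin n → Fin n → Prop) :
    IsLeast
      { v : ℝ | ∃ (z : Fin p → ℝ) (y : Fin p → Fin n → ℝ) (T : Fin p → ℝ)
          (x : Fin p → Fin n → ℝ),
          Form3LPFeasible n p M D adj z y T x ∧ v = ∑ q : Fin p, z q }
      1 := by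
  constructor
  · refine ⟨_, _, _, _, form3LPFeasible_uniform hp hD adj, ?_⟩
    simpa using (sum_fin_mul_inv_card (p := p) (by omega) 1).symm
  · rintro v ⟨z, y, T, x, hfeas, rfl⟩
    obtain ⟨b, hb⟩ := hpos
    exact hfeas.one_le_sum hb

/-- Proposition 2: the optimal value of the LP relaxation of Formulation 3 is 1. -/
theorem form3_LP_relaxation_optimal_value_one
    (n p M : ℕ) (hn : 1 ≤ n) (hp : 2 ≤ p) (hM : 1 ≤ M)
    (D : Fin n → ℕ) (hD : ∀ b, D b ≤ M) (hpos : ∃ b : Fin n, 1 ≤ D b)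
    (adj : Fin n → Fin n → Prop) (hadjSymm : Symmetric adj) (hadjIrrefl : Irreflexive adj) :
    IsLeast
      { v : ℝ | ∃ (z : Fin p → ℝ) (y : Fin p → Fin n → ℝ) (T : Fin p → ℝ)
          (x : Fin p → Fin n → ℝ),
          Form3LPFeasible n p M D adj z y T x ∧ v = ∑ q : Fin p, z q }
      1 :=
  form3_LP_relaxation_optimal_value_one_general n p M hp D hD hpos adj
end

section
/- There exists an LP-feasible solution (z, y) of the relaxed Formulation 2 whose objective value ∑_{q} ∑_{h ∈ H} z q h equals exactly 1. (Feasible-construction half of Proposition 1: for two patterns one may take y q M b = D b / (2M) and z q M = 1/2 at weight h = M, and all other entries 0.) -/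
open Finset

noncomputable section

def evenTopDwell (p M : ℕ) (_q : Fin p) (h : ℕ) : ℝ :=
  if h = M then (p : ℝ)⁻¹ else 0

def evenTopLoad (n p M : ℕ) (D : Fin n → ℕ) (q : Fin p) (h : ℕ) (b : Fin n) : ℝ :=
  evenTopDwell p M q h * (D b / M)

end

section

variable {n p M : ℕ}

lemma evenTopDwell_nonneg (q : Fin p) (h : ℕ) : 0 ≤ evenTopDwell p M q h := by
  unfold evenTopDwell
  split_ifs <;> positivity

lemma inv_natCast_le_half (hp : 2 ≤ p) : (p : ℝ)⁻¹ ≤ 1 / 2 := by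
  rw [one_div]
  exact inv_anti₀ two_pos (by exact_mod_cast hp)

lemma evenTopDwell_le_half (hp : 2 ≤ p) (q : Fin p) (h : ℕ) : evenTopDwell p M q h ≤ 1 / 2 := by
  unfold evenTopDwell
  split_ifs
  · exact inv_natCast_le_half hp
  · norm_num

lemma sum_Icc_evenTopDwell (hM : 1 ≤ M) (q : Fin p) (f : ℕ → ℝ) :
    ∑ h ∈ Icc 1 M, f h * evenTopDwell p M q h = f M * (p : ℝ)⁻¹ := by
  simp only [evenTopDwell, mul_ite, mul_zero, sum_ite_eq', mem_Icc, le_refl, and_true, hM,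
    if_true]

lemma sum_Icc_evenTopDwell_eq_inv (hM : 1 ≤ M) (q : Fin p) :
    ∑ h ∈ Icc 1 M, evenTopDwell p M q h = (p : ℝ)⁻¹ := by
  simpa using sum_Icc_evenTopDwell hM q (fun _ => 1)

lemma demandRatio_mem_Icc {D : Fin n → ℕ} (hM : 1 ≤ M) (hD : ∀ b, D b ≤ M) (b : Fin n) :
    (D b / M : ℝ) ∈ Set.Icc 0 1 := by
  have hM' : (0 : ℝ) < M := by exact_mod_cast hM
  exact ⟨by positivity, (div_le_one hM').2 (by exact_mod_cast hD b)⟩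

lemma sum_sum_mul_evenTopLoad (hp : p ≠ 0) (hM : 1 ≤ M) (D : Fin n → ℕ) (b : Fin n) :
    ∑ q : Fin p, ∑ h ∈ Icc 1 M, (h : ℝ) * evenTopLoad n p M D q h b = D b := by
  have hM' : (M : ℝ) ≠ 0 := by positivity
  simp_rw [evenTopLoad, mul_comm (evenTopDwell p M _ _), ← mul_assoc, sum_Icc_evenTopDwell hM]
  simp only [sum_const, card_univ, Fintype.card_fin, nsmul_eq_mul]
  field_simp

theorem form2LPFeasible_evenTop (hp : 2 ≤ p) (hM : 1 ≤ M) (D : Fin n → ℕ)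
    (hD : ∀ b, D b ≤ M) (adj : Fin n → Fin n → Prop) :
    Form2LPFeasible n p M D adj (evenTopDwell p M) (evenTopLoad n p M D) := by
  have hz₀ := evenTopDwell_nonneg (p := p) (M := M)
  have hz₁ := evenTopDwell_le_half (M := M) hp
  have hy₀ (q : Fin p) (h : ℕ) (b : Fin n) : 0 ≤ evenTopLoad n p M D q h b :=
    mul_nonneg (hz₀ q h) (demandRatio_mem_Icc hM hD b).1
  have hy_le (q : Fin p) (h : ℕ) (b : Fin n) : evenTopLoad n p M D q h b ≤ evenTopDwell p M q h :=
    mul_le_of_le_one_right (hz₀ q h) (demandRatio_mem_Icc hM hD b).2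
  exact ⟨fun q h _ => ⟨hz₀ q h, by linarith [hz₁ q h]⟩,
    fun q h _ b => ⟨hy₀ q h b, by linarith [hy_le q h b, hz₁ q h]⟩,
    fun q h _ b => hy_le q h b,
    fun q => by linarith [sum_Icc_evenTopDwell_eq_inv hM q, inv_natCast_le_half hp],
    sum_sum_mul_evenTopLoad (by omega) hM D,
    fun q h _ b b' _ => by linarith [hy_le q h b, hy_le q h b', hz₁ q h]⟩

theorem sum_sum_evenTopDwell (hp : p ≠ 0) (hM : 1 ≤ M) :
    ∑ q : Fin p, ∑ h ∈ Icc 1 M, evenTopDwell p M q h = 1 := by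
  simp [sum_Icc_evenTopDwell_eq_inv hM, hp]

end

theorem form2_LP_relaxation_achieves_one_general
    (n p M : ℕ) (hp : 2 ≤ p) (hM : 1 ≤ M)
    (D : Fin n → ℕ) (hD : ∀ b, D b ≤ M)
    (adj : Fin n → Fin n → Prop) :
    ∃ (z : Fin p → ℕ → ℝ) (y : Fin p → ℕ → Fin n → ℝ),
      Form2LPFeasible n p M D adj z y ∧
      ∑ q : Fin p, ∑ h ∈ Finset.Icc 1 M, z q h = 1 :=
  ⟨evenTopDwell p M, evenTopLoad n p M D, form2LPFeasible_evenTop hp hM D hD adj,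
    sum_sum_evenTopDwell (by omega) hM⟩

/-- Feasible-construction half of Proposition 1: there is an LP-feasible solution of the
relaxed Formulation 2 with objective value exactly 1. -/
theorem form2_LP_relaxation_achieves_one
    (n p M : ℕ) (hn : 1 ≤ n) (hp : 2 ≤ p) (hM : 1 ≤ M)
    (D : Fin n → ℕ) (hD : ∀ b, D b ≤ M) (hmax : ∃ bstar : Fin n, D bstar = M)
    (adj : Fin n → Fin n → Prop) (hadjSymm : Symmetric adj) (hadjIrrefl : Irreflexive adj) :
    ∃ (z : Fin p → ℕ → ℝ) (y : Fin p → ℕ → Fin n → ℝ),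
      Form2LPFeasible n p M D adj z y ∧
      ∑ q : Fin p, ∑ h ∈ Finset.Icc 1 M, z q h = 1 :=
  form2_LP_relaxation_achieves_one_general n p M hp hM D hD adj
end

section
/- Suppose p ≥ Nat.log 2 M + 1. Then there exists a solution (z, y, T, x) satisfying constraints (i)–(v) of Formulation 3 (the interference constraint (vi) and the cardinality constraint are not imposed) in which every z q and every y q b lies in {0,1}, whose objective value satisfies ∑_q z q ≤ Nat.log 2 M + 1. (DP2 provides a feasible upper bound for Formulation 3: pattern k illuminates exactly the beams b with Nat.testBit (D b) k = true, with dwell time T k = 2^k.) -/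
/-! DP2 writes every demand in binary. Pattern `k` illuminates exactly the beams whose demand
has bit `k` set, for the dwell time `2 ^ k`; summing over the patterns recovers each demand from
its binary expansion. Since every demand is at most `M < 2 ^ (⌊log₂ M⌋ + 1)`, only the patterns
`k ≤ ⌊log₂ M⌋` are needed, and each of their dwell times `2 ^ k ≤ M` is small enough for the
big-`M` constraints (iv) and (v) to be slack on the beams a pattern does not illuminate. -/

/-- Constraints (i)–(v) of Formulation 3 (without the interference and cardinality
constraints). -/
def Form3FeasibleNoInterference (n p M : ℕ) (D : Fin n → ℕ)
    (z : Fin p → ℝ) (y : Fin p → Fin n → ℝ) (T : Fin p → ℝ) (x : Fin p → Fin n → ℝ) : Prop :=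
  (∀ q : Fin p, 0 ≤ z q ∧ z q ≤ 1) ∧
  (∀ q : Fin p, ∀ b : Fin n, 0 ≤ y q b ∧ y q b ≤ 1) ∧
  (∀ q : Fin p, 0 ≤ T q) ∧
  (∀ q : Fin p, ∀ b : Fin n, 0 ≤ x q b) ∧
  -- (i) logic constraint
  (∀ q : Fin p, ∀ b : Fin n, y q b ≤ z q) ∧
  -- (ii) logic constraint on durations
  (∀ q : Fin p, ∀ b : Fin n, x q b ≤ (D b : ℝ) * y q b) ∧
  -- (iii) demand constraint
  (∀ b : Fin n, ∑ q : Fin p, x q b = (D b : ℝ)) ∧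
  -- (iv) and (v): equal dwell time within a pattern
  (∀ q : Fin p, ∀ b : Fin n, x q b ≤ T q + (M : ℝ) * (1 - y q b)) ∧
  (∀ q : Fin p, ∀ b : Fin n, T q - (M : ℝ) * (1 - y q b) ≤ x q b)

open Finset

namespace Nat

theorem sum_range_ite_testBit_two_pow {d p : ℕ} (hd : d < 2 ^ p) :
    ∑ i ∈ range p, (if d.testBit i then 2 ^ i else 0) = d := by
  rw [← sum_filter]
  convert sum_toFinset_bitIndices_two_pow d using 2
  ext i
  simp only [mem_filter, mem_range, List.mem_toFinset, mem_bitIndices, and_iff_right_iff_imp]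
  exact fun h ↦ (Nat.pow_lt_pow_iff_right one_lt_two).1 ((ge_two_pow_of_testBit h).trans_lt hd)

theorem le_log_two_of_testBit {d i M : ℕ} (h : d.testBit i) (hdM : d ≤ M) : i ≤ log 2 M :=
  le_log_of_pow_le one_lt_two ((ge_two_pow_of_testBit h).trans hdM)

end Nat

section DP2

variable {n p M d k : ℕ} {D : Fin n → ℕ}

noncomputable def dp2Active (M k : ℕ) : ℝ := if k ≤ Nat.log 2 M then 1 else 0

noncomputable def dp2Illuminates (d k : ℕ) : ℝ := if d.testBit k then 1 else 0

lemma dp2Active_nonneg : 0 ≤ dp2Active M k := by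
  unfold dp2Active
  split_ifs <;> simp

lemma dp2Active_le_one : dp2Active M k ≤ 1 := by
  unfold dp2Active
  split_ifs <;> simp

lemma dp2Illuminates_nonneg : 0 ≤ dp2Illuminates d k := by
  unfold dp2Illuminates
  split_ifs <;> simp

lemma dp2Illuminates_le_one : dp2Illuminates d k ≤ 1 := by
  unfold dp2Illuminates
  split_ifs <;> simp

lemma dp2Active_eq_zero_or_one : dp2Active M k = 0 ∨ dp2Active M k = 1 := by
  unfold dp2Active
  split_ifs <;> simp

lemma dp2Illuminates_eq_zero_or_one : dp2Illuminates d k = 0 ∨ dp2Illuminates d k = 1 := by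
  unfold dp2Illuminates
  split_ifs <;> simp

lemma dp2Active_eq_one (hdM : d ≤ M) (h : d.testBit k) : dp2Active M k = 1 :=
  if_pos (Nat.le_log_two_of_testBit h hdM)

lemma two_pow_mul_dp2Active_le (hM : M ≠ 0) : 2 ^ k * dp2Active M k ≤ M := by
  unfold dp2Active
  split_ifs with hk
  · rw [mul_one]
    exact_mod_cast (Nat.pow_le_pow_right two_pos hk).trans (Nat.pow_log_le_self 2 hM)
  · simp

lemma sum_dp2Active (hp : Nat.log 2 M + 1 ≤ p) :
    ∑ q : Fin p, dp2Active M q = Nat.log 2 M + 1 := by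
  have hfilter : (range p).filter (· ≤ Nat.log 2 M) = range (Nat.log 2 M + 1) := by
    ext k
    simp only [mem_filter, mem_range]
    omega
  rw [Fin.sum_univ_eq_sum_range (dp2Active M)]
  simp only [dp2Active, sum_boole, hfilter, card_range, Nat.cast_add, Nat.cast_one]

lemma sum_two_pow_mul_dp2Illuminates (hdM : d ≤ M) (hp : Nat.log 2 M + 1 ≤ p) :
    ∑ q : Fin p, 2 ^ (q : ℕ) * dp2Illuminates d q = d := by
  have hd : d < 2 ^ p := hdM.trans_lt <| (Nat.lt_pow_succ_log_self one_lt_two M).trans_le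
    (Nat.pow_le_pow_right two_pos hp)
  rw [Fin.sum_univ_eq_sum_range (fun k ↦ 2 ^ k * dp2Illuminates d k),
    ← congrArg (Nat.cast (R := ℝ)) (Nat.sum_range_ite_testBit_two_pow hd)]
  push_cast
  refine sum_congr rfl fun k _ ↦ ?_
  unfold dp2Illuminates
  split_ifs <;> simp

theorem form3FeasibleNoInterference_dp2 (hM : M ≠ 0) (hD : ∀ b, D b ≤ M)
    (hp : Nat.log 2 M + 1 ≤ p) :
    Form3FeasibleNoInterference n p M D (fun q ↦ dp2Active M q)
      (fun q b ↦ dp2Illuminates (D b) q) (fun q ↦ 2 ^ (q : ℕ) * dp2Active M q)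
      (fun q b ↦ 2 ^ (q : ℕ) * dp2Illuminates (D b) q) := by
  have hT (q : ℕ) : 0 ≤ 2 ^ q * dp2Active M q := mul_nonneg (by positivity) dp2Active_nonneg
  refine ⟨fun _ ↦ ⟨dp2Active_nonneg, dp2Active_le_one⟩,
    fun _ _ ↦ ⟨dp2Illuminates_nonneg, dp2Illuminates_le_one⟩, fun q ↦ hT q,
    fun _ _ ↦ mul_nonneg (by positivity) dp2Illuminates_nonneg, fun q b ↦ ?_, fun q b ↦ ?_,
    fun b ↦ sum_two_pow_mul_dp2Illuminates (hD b) hp, fun q b ↦ ?_, fun q b ↦ ?_⟩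
  all_goals by_cases hbit : (D b).testBit q
  · simp [dp2Illuminates, hbit, dp2Active_eq_one (hD b) hbit]
  · simpa [dp2Illuminates, hbit] using dp2Active_nonneg
  · simpa [dp2Illuminates, hbit] using
      (Nat.cast_le (α := ℝ)).2 (Nat.ge_two_pow_of_testBit hbit)
  · simp [dp2Illuminates, hbit]
  · simp [dp2Illuminates, hbit, dp2Active_eq_one (hD b) hbit]
  · simpa [dp2Illuminates, hbit] using add_nonneg (hT q) (Nat.cast_nonneg M)
  · simp [dp2Illuminates, hbit, dp2Active_eq_one (hD b) hbit]
  · simpa [dp2Illuminates, hbit] using two_pow_mul_dp2Active_le hM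

end DP2

theorem dp2_upper_bound_form3_general
    (n p M : ℕ) (hM : 1 ≤ M)
    (D : Fin n → ℕ) (hD : ∀ b, D b ≤ M)
    (hp : Nat.log 2 M + 1 ≤ p) :
    ∃ (z : Fin p → ℝ) (y : Fin p → Fin n → ℝ) (T : Fin p → ℝ) (x : Fin p → Fin n → ℝ),
      Form3FeasibleNoInterference n p M D z y T x ∧
      (∀ q : Fin p, z q = 0 ∨ z q = 1) ∧
      (∀ q : Fin p, ∀ b : Fin n, y q b = 0 ∨ y q b = 1) ∧
      ∑ q : Fin p, z q ≤ (Nat.log 2 M + 1 : ℝ) :=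
  ⟨_, _, _, _, form3FeasibleNoInterference_dp2 (Nat.one_le_iff_ne_zero.1 hM) hD hp,
    fun _ ↦ dp2Active_eq_zero_or_one, fun _ _ ↦ dp2Illuminates_eq_zero_or_one,
    (sum_dp2Active hp).le⟩

/-- DP2 provides a feasible upper bound for Formulation 3: with at least
`⌊log₂ M⌋ + 1` patterns available, there is a binary solution satisfying constraints
(i)–(v) whose objective value is at most `⌊log₂ M⌋ + 1`. -/
theorem dp2_upper_bound_form3
    (n p M : ℕ) (hn : 1 ≤ n) (hM : 1 ≤ M)
    (D : Fin n → ℕ) (hD : ∀ b, D b ≤ M)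
    (hp : Nat.log 2 M + 1 ≤ p) :
    ∃ (z : Fin p → ℝ) (y : Fin p → Fin n → ℝ) (T : Fin p → ℝ) (x : Fin p → Fin n → ℝ),
      Form3FeasibleNoInterference n p M D z y T x ∧
      (∀ q : Fin p, z q = 0 ∨ z q = 1) ∧
      (∀ q : Fin p, ∀ b : Fin n, y q b = 0 ∨ y q b = 1) ∧
      ∑ q : Fin p, z q ≤ (Nat.log 2 M + 1 : ℝ) :=
  dp2_upper_bound_form3_general n p M hM D hD hp
end

section
/- Suppose p ≥ Nat.log 2 M + 1. Then there exists a solution (z, y) satisfying constraints (i)–(iii) of Formulation 2 (the interference constraint (iv) and the cardinality constraint are not imposed) in which every z q h and every y q h b lies in {0,1}, whose objective value satisfies ∑_{q} ∑_{h ∈ H} z q h ≤ Nat.log 2 M + 1. (DP2 provides a feasible upper bound for Formulation 2: pattern k carries the single weight h = 2^k and illuminates exactly the beams b with Nat.testBit (D b) k = true.) -/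
/-!
DP2 writes every demand in binary: pattern `q` is shone with the single weight `2 ^ q` onto
exactly the beams whose demand has bit `q` set. A demand `D b ≤ M < 2 ^ p` has no bits beyond
the `p` available patterns, so every demand is met exactly, and only the patterns with
`2 ^ q ≤ M`, that is `q ≤ ⌊log₂ M⌋`, have their weight in `H = [1, M]` and count towards the
objective.
-/

/-- Constraints (i)–(iii) of Formulation 2 (without the interference and cardinality
constraints). -/
def Form2FeasibleNoInterference (n p M : ℕ) (D : Fin n → ℕ)
    (z : Fin p → ℕ → ℝ) (y : Fin p → ℕ → Fin n → ℝ) : Prop :=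
  (∀ q : Fin p, ∀ h ∈ Finset.Icc 1 M, 0 ≤ z q h ∧ z q h ≤ 1) ∧
  (∀ q : Fin p, ∀ h ∈ Finset.Icc 1 M, ∀ b : Fin n, 0 ≤ y q h b ∧ y q h b ≤ 1) ∧
  -- (i) logic constraint
  (∀ q : Fin p, ∀ h ∈ Finset.Icc 1 M, ∀ b : Fin n, y q h b ≤ z q h) ∧
  -- (ii) one dwell time per pattern
  (∀ q : Fin p, ∑ h ∈ Finset.Icc 1 M, z q h ≤ 1) ∧
  -- (iii) demand constraint
  (∀ b : Fin n, ∑ q : Fin p, ∑ h ∈ Finset.Icc 1 M, (h : ℝ) * y q h b = (D b : ℝ))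

open Finset

namespace Nat

theorem sum_range_ite_testBit_two_pow_s10 {m L : ℕ} (hm : m < 2 ^ L) :
    ∑ k ∈ range L, (if m.testBit k then 2 ^ k else 0) = m := by
  have hbits : {k ∈ range L | m.testBit k} = m.bitIndices.toFinset := by
    ext k
    simp only [mem_filter, mem_range, List.mem_toFinset, mem_bitIndices, and_iff_right_iff_imp]
    exact fun hk =>
      (Nat.pow_lt_pow_iff_right one_lt_two).1 ((ge_two_pow_of_testBit hk).trans_lt hm)
  rw [← sum_filter, hbits, sum_toFinset_bitIndices_two_pow]

theorem card_filter_two_pow_le_le_log_add_one (p M : ℕ) :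
    #{q : Fin p | 2 ^ (q : ℕ) ≤ M} ≤ log 2 M + 1 := by
  calc #{q : Fin p | 2 ^ (q : ℕ) ≤ M}
      ≤ #(range (log 2 M + 1)) :=
        card_le_card_of_injOn Fin.val
          (fun q hq => mem_range.2 <| lt_succ_of_le <|
            le_log_of_pow_le one_lt_two (mem_filter.1 hq).2)
          Fin.val_injective.injOn
    _ = log 2 M + 1 := card_range _

end Nat

section DP2

variable {n p : ℕ}

def dp2Z (q : Fin p) (h : ℕ) : ℝ := if h = 2 ^ (q : ℕ) then 1 else 0

def dp2Y (D : Fin n → ℕ) (q : Fin p) (h : ℕ) (b : Fin n) : ℝ :=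
  if (D b).testBit q then dp2Z q h else 0

theorem dp2Z_eq_zero_or_one (q : Fin p) (h : ℕ) : dp2Z q h = 0 ∨ dp2Z q h = 1 := by
  unfold dp2Z; split_ifs <;> simp

theorem dp2Y_eq_zero_or_one (D : Fin n → ℕ) (q : Fin p) (h : ℕ) (b : Fin n) :
    dp2Y D q h b = 0 ∨ dp2Y D q h b = 1 := by
  unfold dp2Y; split_ifs
  exacts [dp2Z_eq_zero_or_one q h, .inl rfl]

theorem dp2Z_nonneg (q : Fin p) (h : ℕ) : 0 ≤ dp2Z q h := by
  unfold dp2Z; split_ifs <;> norm_num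

theorem dp2Z_le_one (q : Fin p) (h : ℕ) : dp2Z q h ≤ 1 := by
  unfold dp2Z; split_ifs <;> norm_num

theorem dp2Y_nonneg (D : Fin n → ℕ) (q : Fin p) (h : ℕ) (b : Fin n) : 0 ≤ dp2Y D q h b := by
  unfold dp2Y; split_ifs
  exacts [dp2Z_nonneg q h, le_rfl]

theorem dp2Y_le_dp2Z (D : Fin n → ℕ) (q : Fin p) (h : ℕ) (b : Fin n) :
    dp2Y D q h b ≤ dp2Z q h := by
  unfold dp2Y; split_ifs
  exacts [le_rfl, dp2Z_nonneg q h]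

theorem sum_Icc_dp2Z (M : ℕ) (q : Fin p) :
    ∑ h ∈ Icc 1 M, dp2Z q h = if 2 ^ (q : ℕ) ≤ M then 1 else 0 := by
  simp [dp2Z, Nat.one_le_two_pow]

theorem sum_Icc_mul_dp2Y {M : ℕ} {D : Fin n → ℕ} {b : Fin n} (hD : D b ≤ M) (q : Fin p) :
    ∑ h ∈ Icc 1 M, (h : ℝ) * dp2Y D q h b = if (D b).testBit q then 2 ^ (q : ℕ) else 0 := by
  unfold dp2Y
  split_ifs with hbit
  · have hq : 2 ^ (q : ℕ) ≤ M := (Nat.ge_two_pow_of_testBit hbit).trans hD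
    simp [dp2Z, Nat.one_le_two_pow, hq]
  · simp

theorem sum_sum_Icc_mul_dp2Y {M : ℕ} {D : Fin n → ℕ} {b : Fin n} (hD : D b ≤ M)
    (hMp : M < 2 ^ p) :
    ∑ q : Fin p, ∑ h ∈ Icc 1 M, (h : ℝ) * dp2Y D q h b = D b := by
  simp_rw [sum_Icc_mul_dp2Y hD]
  rw [Fin.sum_univ_eq_sum_range (fun k => if (D b).testBit k then (2 : ℝ) ^ k else 0)]
  exact_mod_cast Nat.sum_range_ite_testBit_two_pow_s10 (hD.trans_lt hMp)

theorem sum_sum_Icc_dp2Z_le (M : ℕ) :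
    ∑ q : Fin p, ∑ h ∈ Icc 1 M, dp2Z q h ≤ (Nat.log 2 M + 1 : ℝ) := by
  simp_rw [sum_Icc_dp2Z, sum_boole]
  exact_mod_cast Nat.card_filter_two_pow_le_le_log_add_one p M

theorem form2FeasibleNoInterference_dp2 {M : ℕ} {D : Fin n → ℕ} (hD : ∀ b, D b ≤ M)
    (hMp : M < 2 ^ p) : Form2FeasibleNoInterference n p M D dp2Z (dp2Y D) :=
  ⟨fun q h _ => ⟨dp2Z_nonneg q h, dp2Z_le_one q h⟩,
    fun q h _ b => ⟨dp2Y_nonneg D q h b, (dp2Y_le_dp2Z D q h b).trans (dp2Z_le_one q h)⟩,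
    fun q h _ b => dp2Y_le_dp2Z D q h b,
    fun q => by rw [sum_Icc_dp2Z]; split_ifs <;> norm_num,
    fun b => sum_sum_Icc_mul_dp2Y (hD b) hMp⟩

end DP2

theorem dp2_upper_bound_form2_general
    (n p M : ℕ)
    (D : Fin n → ℕ) (hD : ∀ b, D b ≤ M)
    (hp : Nat.log 2 M + 1 ≤ p) :
    ∃ (z : Fin p → ℕ → ℝ) (y : Fin p → ℕ → Fin n → ℝ),
      Form2FeasibleNoInterference n p M D z y ∧
      (∀ q : Fin p, ∀ h ∈ Finset.Icc 1 M, z q h = 0 ∨ z q h = 1) ∧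
      (∀ q : Fin p, ∀ h ∈ Finset.Icc 1 M, ∀ b : Fin n, y q h b = 0 ∨ y q h b = 1) ∧
      ∑ q : Fin p, ∑ h ∈ Finset.Icc 1 M, z q h ≤ (Nat.log 2 M + 1 : ℝ) := by
  have hMp : M < 2 ^ p := Nat.lt_pow_of_log_lt one_lt_two hp
  exact ⟨dp2Z, dp2Y D, form2FeasibleNoInterference_dp2 hD hMp,
    fun q h _ => dp2Z_eq_zero_or_one q h, fun q h _ b => dp2Y_eq_zero_or_one D q h b,
    sum_sum_Icc_dp2Z_le M⟩

/-- DP2 provides a feasible upper bound for Formulation 2: with at least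
`⌊log₂ M⌋ + 1` patterns available, there is a binary solution satisfying constraints
(i)–(iii) whose objective value is at most `⌊log₂ M⌋ + 1`. -/
theorem dp2_upper_bound_form2
    (n p M : ℕ) (hn : 1 ≤ n) (hM : 1 ≤ M)
    (D : Fin n → ℕ) (hD : ∀ b, D b ≤ M)
    (hp : Nat.log 2 M + 1 ≤ p) :
    ∃ (z : Fin p → ℕ → ℝ) (y : Fin p → ℕ → Fin n → ℝ),
      Form2FeasibleNoInterference n p M D z y ∧
      (∀ q : Fin p, ∀ h ∈ Finset.Icc 1 M, z q h = 0 ∨ z q h = 1) ∧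
      (∀ q : Fin p, ∀ h ∈ Finset.Icc 1 M, ∀ b : Fin n, y q h b = 0 ∨ y q h b = 1) ∧
      ∑ q : Fin p, ∑ h ∈ Finset.Icc 1 M, z q h ≤ (Nat.log 2 M + 1 : ℝ) :=
  dp2_upper_bound_form2_general n p M D hD hp
end

section
/- Let (z, y, T, x) be an integer-feasible solution of Formulation 3 and suppose there are two distinct patterns q1 ≠ q2 with z q1 = 1, z q2 = 1 and y q1 b = y q2 b for every beam b (the two patterns illuminate the same set of beams). Then there exists an integer-feasible solution (z', y', T', x') of Formulation 3 with objective value ∑_q z' q = (∑_q z q) − 1. (Merging two identical patterns into one pattern with dwell time T q1 + T q2 preserves feasibility and reduces the number of patterns.) -/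
/-! In an integer-feasible solution the dwell-time constraints force `x q b = T q` on the beams
pattern `q` lights and `x q b = 0` on the others. Removing `q2` and giving `q1` the duration
`x q1 + x q2` therefore meets every demand, and the merged dwell time `T q1 + T q2` equals
`x q1 b + x q2 b ≤ D b ≤ M` on any lit beam `b`. -/

open Function

theorem Finset.sum_update_eq_sub_add {ι G : Type*} [Fintype ι] [DecidableEq ι] [AddCommGroup G]
    (f : ι → G) (i : ι) (b : G) : ∑ k, update f i b k = ∑ k, f k - f i + b := by
  rw [Finset.sum_update_of_mem (Finset.mem_univ i),
    Finset.sum_eq_add_sum_sdiff_singleton_of_mem (Finset.mem_univ i) f]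
  abel

theorem Finset.sum_update_add_update_zero {ι G : Type*} [Fintype ι] [DecidableEq ι]
    [AddCommGroup G] (f : ι → G) {i j : ι} (hij : i ≠ j) :
    ∑ k, update (update f i (f i + f j)) j 0 k = ∑ k, f k := by
  rw [Finset.sum_update_eq_sub_add, Finset.sum_update_eq_sub_add, update_of_ne hij.symm]
  abel

section PatternConstraints

variable {n : ℕ} (M : ℕ) (D : Fin n → ℕ) (adj : Fin n → Fin n → Prop)

/-- All constraints of an integer-feasible solution except the demand constraint (iii), the only
one coupling different patterns. -/
structure Form3Column (z : ℝ) (y : Fin n → ℝ) (T : ℝ) (x : Fin n → ℝ) : Prop where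
  z_mem_Icc : 0 ≤ z ∧ z ≤ 1
  y_mem_Icc : ∀ b, 0 ≤ y b ∧ y b ≤ 1
  T_nonneg : 0 ≤ T
  x_nonneg : ∀ b, 0 ≤ x b
  y_le_z : ∀ b, y b ≤ z
  x_le_demand : ∀ b, x b ≤ D b * y b
  x_le_dwell : ∀ b, x b ≤ T + M * (1 - y b)
  dwell_le_x : ∀ b, T - M * (1 - y b) ≤ x b
  interference : ∀ b b', adj b b' → y b + y b' ≤ 1
  z_binary : z = 0 ∨ z = 1
  y_binary : ∀ b, y b = 0 ∨ y b = 1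

variable {M D adj}

theorem form3IntFeasible_iff {p : ℕ} {z : Fin p → ℝ} {y : Fin p → Fin n → ℝ} {T : Fin p → ℝ}
    {x : Fin p → Fin n → ℝ} :
    Form3IntFeasible n p M D adj z y T x ↔
      (∀ q, Form3Column M D adj (z q) (y q) (T q) (x q)) ∧ ∀ b, ∑ q, x q b = D b := by
  constructor
  · rintro ⟨⟨hz, hy, hT, hx, hyz, hxD, hdem, hxT, hTx, hadj⟩, hzb, hyb⟩
    exact ⟨fun q ↦ ⟨hz q, hy q, hT q, hx q, hyz q, hxD q, hxT q, hTx q, hadj q, hzb q, hyb q⟩,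
      hdem⟩
  · rintro ⟨hcol, hdem⟩
    exact ⟨⟨fun q ↦ (hcol q).z_mem_Icc, fun q ↦ (hcol q).y_mem_Icc, fun q ↦ (hcol q).T_nonneg,
      fun q ↦ (hcol q).x_nonneg, fun q ↦ (hcol q).y_le_z, fun q ↦ (hcol q).x_le_demand, hdem,
      fun q ↦ (hcol q).x_le_dwell, fun q ↦ (hcol q).dwell_le_x, fun q ↦ (hcol q).interference⟩,
      fun q ↦ (hcol q).z_binary, fun q ↦ (hcol q).y_binary⟩

theorem Form3Column.zero : Form3Column M D adj 0 0 0 0 where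
  z_mem_Icc := by norm_num
  y_mem_Icc _ := by norm_num
  T_nonneg := le_rfl
  x_nonneg _ := le_rfl
  y_le_z _ := le_rfl
  x_le_demand _ := by simp
  x_le_dwell _ := by simp
  dwell_le_x _ := by simp
  interference _ _ _ := by norm_num
  z_binary := Or.inl rfl
  y_binary _ := Or.inl rfl

namespace Form3Column

variable {z z' : ℝ} {y : Fin n → ℝ} {T T' : ℝ} {x x' : Fin n → ℝ}

theorem x_eq_of_y_eq_zero (h : Form3Column M D adj z y T x) {b : Fin n} (hb : y b = 0) :
    x b = 0 :=
  le_antisymm (by simpa [hb] using h.x_le_demand b) (h.x_nonneg b)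

theorem x_eq_of_y_eq_one (h : Form3Column M D adj z y T x) {b : Fin n} (hb : y b = 1) :
    x b = T :=
  le_antisymm (by simpa [hb] using h.x_le_dwell b) (by simpa [hb] using h.dwell_le_x b)

/-- On a lit beam `T + T' = x b + x' b ≤ D b ≤ M`, so the cap at `M` only acts on a pattern
lighting no beam, where (v) would otherwise fail. -/
theorem merge (hD : ∀ b, D b ≤ M) (h : Form3Column M D adj z y T x)
    (h' : Form3Column M D adj z' y T' x') (hx : ∀ b, x b + x' b ≤ D b) :
    Form3Column M D adj z y (min (T + T') M) (x + x') := by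
  have hmin_of_lit : ∀ b, y b = 1 → min (T + T') (M : ℝ) = T + T' := fun b hb ↦ by
    have := hx b
    rw [h.x_eq_of_y_eq_one hb, h'.x_eq_of_y_eq_one hb] at this
    exact min_eq_left (this.trans (mod_cast hD b))
  have hmin_nonneg : 0 ≤ min (T + T') (M : ℝ) :=
    le_min (add_nonneg h.T_nonneg h'.T_nonneg) M.cast_nonneg
  refine { h with
    T_nonneg := hmin_nonneg
    x_nonneg := fun b ↦ add_nonneg (h.x_nonneg b) (h'.x_nonneg b)
    x_le_demand := fun b ↦ ?_
    x_le_dwell := fun b ↦ ?_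
    dwell_le_x := fun b ↦ ?_ } <;> rcases h.y_binary b with hb | hb
  · simp [hb, h.x_eq_of_y_eq_zero hb, h'.x_eq_of_y_eq_zero hb]
  · simpa [hb] using hx b
  · simpa [hb, h.x_eq_of_y_eq_zero hb, h'.x_eq_of_y_eq_zero hb] using
      add_nonneg hmin_nonneg M.cast_nonneg
  · simp [hb, h.x_eq_of_y_eq_one hb, h'.x_eq_of_y_eq_one hb, hmin_of_lit b hb]
  · simp [hb, h.x_eq_of_y_eq_zero hb, h'.x_eq_of_y_eq_zero hb]
  · simp [hb, h.x_eq_of_y_eq_one hb, h'.x_eq_of_y_eq_one hb, hmin_of_lit b hb]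

end Form3Column

end PatternConstraints

theorem form3_merge_identical_patterns_general
    (n p M : ℕ)
    (D : Fin n → ℕ) (hD : ∀ b, D b ≤ M)
    (adj : Fin n → Fin n → Prop)
    (z : Fin p → ℝ) (y : Fin p → Fin n → ℝ) (T : Fin p → ℝ) (x : Fin p → Fin n → ℝ)
    (hfeas : Form3IntFeasible n p M D adj z y T x)
    (q1 q2 : Fin p) (hne : q1 ≠ q2) (hz2 : z q2 = 1)
    (hsame : ∀ b : Fin n, y q1 b = y q2 b) :
    ∃ (z' : Fin p → ℝ) (y' : Fin p → Fin n → ℝ) (T' : Fin p → ℝ) (x' : Fin p → Fin n → ℝ),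
      Form3IntFeasible n p M D adj z' y' T' x' ∧
      ∑ q : Fin p, z' q = (∑ q : Fin p, z q) - 1 := by
  obtain ⟨hcol, hdem⟩ := form3IntFeasible_iff.1 hfeas
  have hpair : ∀ b, x q1 b + x q2 b ≤ D b := fun b ↦ hdem b ▸
    Finset.add_le_sum (fun q _ ↦ (hcol q).x_nonneg b) (Finset.mem_univ _) (Finset.mem_univ _) hne
  have hmerged : Form3Column M D adj (z q1) (y q1) (min (T q1 + T q2) M) (x q1 + x q2) :=
    (hcol q1).merge hD (funext hsame ▸ hcol q2) hpair
  refine ⟨update z q2 0, update y q2 0, update (update T q1 (min (T q1 + T q2) M)) q2 0,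
    update (update x q1 (x q1 + x q2)) q2 0, form3IntFeasible_iff.2 ⟨fun q ↦ ?_, fun b ↦ ?_⟩, ?_⟩
  · rcases eq_or_ne q q2 with rfl | hq2
    · simpa using Form3Column.zero
    rcases eq_or_ne q q1 with rfl | hq1
    · simpa [hq2] using hmerged
    · simpa [hq1, hq2] using hcol q
  · rw [← Finset.sum_apply, Finset.sum_update_add_update_zero x hne, Finset.sum_apply, hdem]
  · rw [Finset.sum_update_eq_sub_add, hz2, add_zero]

/-- Merging two identical patterns: if an integer-feasible solution of Formulation 3 uses
two distinct patterns illuminating the same set of beams, there is an integer-feasible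
solution whose objective value is one less. -/
theorem form3_merge_identical_patterns
    (n p M : ℕ) (hn : 1 ≤ n) (hp : 2 ≤ p) (hM : 1 ≤ M)
    (D : Fin n → ℕ) (hD : ∀ b, D b ≤ M)
    (adj : Fin n → Fin n → Prop) (hadjSymm : Symmetric adj) (hadjIrrefl : Irreflexive adj)
    (z : Fin p → ℝ) (y : Fin p → Fin n → ℝ) (T : Fin p → ℝ) (x : Fin p → Fin n → ℝ)
    (hfeas : Form3IntFeasible n p M D adj z y T x)
    (q1 q2 : Fin p) (hne : q1 ≠ q2) (hz1 : z q1 = 1) (hz2 : z q2 = 1)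
    (hsame : ∀ b : Fin n, y q1 b = y q2 b) :
    ∃ (z' : Fin p → ℝ) (y' : Fin p → Fin n → ℝ) (T' : Fin p → ℝ) (x' : Fin p → Fin n → ℝ),
      Form3IntFeasible n p M D adj z' y' T' x' ∧
      ∑ q : Fin p, z' q = (∑ q : Fin p, z q) - 1 :=
  form3_merge_identical_patterns_general n p M D hD adj z y T x hfeas q1 q2 hne hz2 hsame
end

section
/- Let (z, y, T, x) be an integer-feasible solution of Formulation 3 that minimizes the objective ∑_q z q among all integer-feasible solutions of Formulation 3. Then all used patterns are distinct: for any two distinct patterns q1 ≠ q2 with z q1 = 1 and z q2 = 1, there exists a beam b with y q1 b ≠ y q2 b. (All patterns in an optimal solution are distinct, since two patterns illuminating the same beam set could be combined into one with dwell time T q1 + T q2.) -/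
open Finset Function

theorem Fintype.sum_update_eq {ι A : Type*} [Fintype ι] [DecidableEq ι] [AddCommGroup A]
    (f : ι → A) (i : ι) (a : A) : ∑ j, update f i a j = ∑ j, f j - f i + a := by
  rw [sum_update_of_mem (mem_univ i), ← add_sum_erase univ f (mem_univ i),
    sdiff_singleton_eq_erase]
  abel

/-- The constraints of Formulation 3 that involve a single pattern `(z q, y q, T q, x q)`,
with `z q` and `y q` binary. -/
structure Form3PatternFeasible {n : ℕ} (M : ℕ) (D : Fin n → ℕ) (adj : Fin n → Fin n → Prop)
    (zq : ℝ) (yq : Fin n → ℝ) (Tq : ℝ) (xq : Fin n → ℝ) : Prop where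
  z_binary : zq = 0 ∨ zq = 1
  y_binary : ∀ b, yq b = 0 ∨ yq b = 1
  T_nonneg : 0 ≤ Tq
  x_nonneg : ∀ b, 0 ≤ xq b
  y_le_z : ∀ b, yq b ≤ zq
  x_le_demand : ∀ b, xq b ≤ D b * yq b
  x_le_dwell : ∀ b, xq b ≤ Tq + M * (1 - yq b)
  dwell_le_x : ∀ b, Tq - M * (1 - yq b) ≤ xq b
  adj_exclusive : ∀ b b', adj b b' → yq b + yq b' ≤ 1

section

variable {n p M : ℕ} {D : Fin n → ℕ} {adj : Fin n → Fin n → Prop}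

theorem form3IntFeasible_iff_patternFeasible {z : Fin p → ℝ} {y : Fin p → Fin n → ℝ}
    {T : Fin p → ℝ} {x : Fin p → Fin n → ℝ} :
    Form3IntFeasible n p M D adj z y T x ↔
      (∀ q, Form3PatternFeasible M D adj (z q) (y q) (T q) (x q)) ∧
        ∀ b, ∑ q, x q b = D b := by
  constructor
  · rintro ⟨⟨-, -, hT, hx, hyz, hxD, hdem, hxT, hTx, hadj⟩, hz, hy⟩
    exact ⟨fun q ↦ ⟨hz q, hy q, hT q, hx q, hyz q, hxD q, hxT q, hTx q, hadj q⟩, hdem⟩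
  · rintro ⟨h, hdem⟩
    have unit_of_binary {t : ℝ} (ht : t = 0 ∨ t = 1) : 0 ≤ t ∧ t ≤ 1 := by
      rcases ht with rfl | rfl <;> norm_num
    exact ⟨⟨fun q ↦ unit_of_binary (h q).z_binary,
      fun q b ↦ unit_of_binary ((h q).y_binary b), fun q ↦ (h q).T_nonneg,
      fun q ↦ (h q).x_nonneg, fun q ↦ (h q).y_le_z, fun q ↦ (h q).x_le_demand, hdem,
      fun q ↦ (h q).x_le_dwell, fun q ↦ (h q).dwell_le_x, fun q ↦ (h q).adj_exclusive⟩,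
      fun q ↦ (h q).z_binary, fun q ↦ (h q).y_binary⟩

namespace Form3PatternFeasible

variable {zq : ℝ} {yq : Fin n → ℝ} {Tq : ℝ} {xq : Fin n → ℝ}

theorem zero : Form3PatternFeasible M D adj 0 0 0 0 where
  z_binary := .inl rfl
  y_binary _ := .inl rfl
  T_nonneg := le_rfl
  x_nonneg _ := le_rfl
  y_le_z _ := le_rfl
  x_le_demand _ := by simp
  x_le_dwell _ := by simp
  dwell_le_x _ := by simp
  adj_exclusive _ _ _ := by simp

theorem x_eq_zero (h : Form3PatternFeasible M D adj zq yq Tq xq) {b : Fin n} (hb : yq b = 0) :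
    xq b = 0 :=
  le_antisymm (by simpa [hb] using h.x_le_demand b) (h.x_nonneg b)

theorem x_eq_dwell (h : Form3PatternFeasible M D adj zq yq Tq xq) {b : Fin n} (hb : yq b = 1) :
    xq b = Tq :=
  le_antisymm (by simpa [hb] using h.x_le_dwell b) (by simpa [hb] using h.dwell_le_x b)

/-- The dwell time is capped at `M` so that the merged pattern stays feasible even when it
illuminates no beam. -/
theorem merge (hD : ∀ b, D b ≤ M) {z₁ z₂ T₁ T₂ : ℝ} {x₁ x₂ : Fin n → ℝ}
    (h₁ : Form3PatternFeasible M D adj z₁ yq T₁ x₁) (h₂ : Form3PatternFeasible M D adj z₂ yq T₂ x₂)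
    (hx : ∀ b, x₁ b + x₂ b ≤ D b) :
    Form3PatternFeasible M D adj z₁ yq (min (T₁ + T₂) M) (x₁ + x₂) := by
  have hM : (0 : ℝ) ≤ M := M.cast_nonneg
  have merged_dwell {b : Fin n} (hb : yq b = 1) : x₁ b + x₂ b = min (T₁ + T₂) M := by
    have hDM : (D b : ℝ) ≤ M := by exact_mod_cast hD b
    have hxb := hx b
    rw [h₁.x_eq_dwell hb, h₂.x_eq_dwell hb] at hxb ⊢
    exact (min_eq_left (hxb.trans hDM)).symm
  have merged_zero {b : Fin n} (hb : yq b = 0) : x₁ b + x₂ b = 0 := by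
    rw [h₁.x_eq_zero hb, h₂.x_eq_zero hb, add_zero]
  have hT : 0 ≤ min (T₁ + T₂) M := le_min (add_nonneg h₁.T_nonneg h₂.T_nonneg) hM
  refine ⟨h₁.z_binary, h₁.y_binary, hT, fun b ↦ add_nonneg (h₁.x_nonneg b) (h₂.x_nonneg b),
    h₁.y_le_z, fun b ↦ ?_, fun b ↦ ?_, fun b ↦ ?_, h₁.adj_exclusive⟩ <;>
    rcases h₁.y_binary b with hb | hb
  · simp [merged_zero hb, hb]
  · simpa [hb] using hx b
  · simp only [Pi.add_apply, merged_zero hb, hb, sub_zero, mul_one]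
    linarith
  · simp [merged_dwell hb, hb]
  · simp only [Pi.add_apply, merged_zero hb, hb, sub_zero, mul_one]
    linarith [min_le_right (T₁ + T₂) (M : ℝ)]
  · simp [merged_dwell hb, hb]

end Form3PatternFeasible

theorem Form3IntFeasible.merge (hD : ∀ b, D b ≤ M) {z : Fin p → ℝ} {y : Fin p → Fin n → ℝ}
    {T : Fin p → ℝ} {x : Fin p → Fin n → ℝ} (hfeas : Form3IntFeasible n p M D adj z y T x)
    {q₁ q₂ : Fin p} (hne : q₁ ≠ q₂) (hy : y q₁ = y q₂) :
    Form3IntFeasible n p M D adj (update z q₂ 0) (update y q₂ 0)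
      (update (update T q₁ (min (T q₁ + T q₂) M)) q₂ 0)
      (update (update x q₁ (x q₁ + x q₂)) q₂ 0) := by
  obtain ⟨hpat, hdem⟩ := form3IntFeasible_iff_patternFeasible.mp hfeas
  refine form3IntFeasible_iff_patternFeasible.mpr ⟨fun q ↦ ?_, fun b ↦ ?_⟩
  · rcases eq_or_ne q q₂ with rfl | hq₂
    · simpa using Form3PatternFeasible.zero
    rcases eq_or_ne q q₁ with rfl | hq₁
    · simpa [hq₂] using (hpat q).merge hD (hy ▸ hpat q₂) fun b ↦ by
        have hpair := sum_le_univ_sum_of_nonneg (s := {q, q₂}) fun q' ↦ (hpat q').x_nonneg b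
        rwa [sum_pair hne, hdem b] at hpair
    · simpa [hq₁, hq₂] using hpat q
  · have hsum : ∑ q, update (update x q₁ (x q₁ + x q₂)) q₂ 0 q = ∑ q, x q := by
      rw [Fintype.sum_update_eq, Fintype.sum_update_eq, update_of_ne hne.symm]
      abel
    simpa [hdem b] using congrFun hsum b

end

theorem form3_optimal_patterns_distinct_general
    (n p M : ℕ)
    (D : Fin n → ℕ) (hD : ∀ b, D b ≤ M)
    (adj : Fin n → Fin n → Prop)
    (z : Fin p → ℝ) (y : Fin p → Fin n → ℝ) (T : Fin p → ℝ) (x : Fin p → Fin n → ℝ)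
    (hfeas : Form3IntFeasible n p M D adj z y T x)
    (hopt : ∀ (z' : Fin p → ℝ) (y' : Fin p → Fin n → ℝ) (T' : Fin p → ℝ)
      (x' : Fin p → Fin n → ℝ), Form3IntFeasible n p M D adj z' y' T' x' →
      ∑ q : Fin p, z q ≤ ∑ q : Fin p, z' q) :
    ∀ q1 q2 : Fin p, q1 ≠ q2 → z q1 = 1 → z q2 = 1 →
      ∃ b : Fin n, y q1 b ≠ y q2 b := by
  intro q1 q2 hne _ hz2
  by_contra! hsame
  have hle := hopt _ _ _ _ (hfeas.merge hD hne (funext hsame))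
  rw [Fintype.sum_update_eq, hz2] at hle
  linarith

/-- All patterns in an optimal integer solution of Formulation 3 are distinct. -/
theorem form3_optimal_patterns_distinct
    (n p M : ℕ) (hn : 1 ≤ n) (hp : 2 ≤ p) (hM : 1 ≤ M)
    (D : Fin n → ℕ) (hD : ∀ b, D b ≤ M)
    (adj : Fin n → Fin n → Prop) (hadjSymm : Symmetric adj) (hadjIrrefl : Irreflexive adj)
    (z : Fin p → ℝ) (y : Fin p → Fin n → ℝ) (T : Fin p → ℝ) (x : Fin p → Fin n → ℝ)
    (hfeas : Form3IntFeasible n p M D adj z y T x)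
    (hopt : ∀ (z' : Fin p → ℝ) (y' : Fin p → Fin n → ℝ) (T' : Fin p → ℝ)
      (x' : Fin p → Fin n → ℝ), Form3IntFeasible n p M D adj z' y' T' x' →
      ∑ q : Fin p, z q ≤ ∑ q : Fin p, z' q) :
    ∀ q1 q2 : Fin p, q1 ≠ q2 → z q1 = 1 → z q2 = 1 →
      ∃ b : Fin n, y q1 b ≠ y q2 b :=
  form3_optimal_patterns_distinct_general n p M D hD adj z y T x hfeas hopt
end

section
/- For every integer-feasible solution (z, y, T, x) of Formulation 3 there exists an integer-feasible solution (z', y', T', x') of Formulation 3 with the same objective value ∑_q z' q = ∑_q z q that additionally satisfies the symmetry-elimination constraints T' q ≤ T' q' for all q ≤ q'. (Validity of the symmetry-elimination constraints (16): ordering the patterns by their dwell times removes permutation symmetry without changing the optimal value.) -/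
section PatternPermutation

variable {n p M : ℕ} {D : Fin n → ℕ} {adj : Fin n → Fin n → Prop}
  {z : Fin p → ℝ} {y : Fin p → Fin n → ℝ} {T : Fin p → ℝ} {x : Fin p → Fin n → ℝ}

theorem Form3LPFeasible.comp_perm (h : Form3LPFeasible n p M D adj z y T x)
    (σ : Equiv.Perm (Fin p)) :
    Form3LPFeasible n p M D adj (z ∘ σ) (y ∘ σ) (T ∘ σ) (x ∘ σ) := by
  obtain ⟨hz, hy, hT, hx, hyz, hxy, hdemand, hdwell, hdwell', hadj⟩ := h
  exact ⟨fun q => hz (σ q), fun q => hy (σ q), fun q => hT (σ q), fun q => hx (σ q),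
    fun q => hyz (σ q), fun q => hxy (σ q),
    fun b => (Equiv.sum_comp σ (x · b)).trans (hdemand b),
    fun q => hdwell (σ q), fun q => hdwell' (σ q), fun q => hadj (σ q)⟩

theorem Form3IntFeasible.comp_perm (h : Form3IntFeasible n p M D adj z y T x)
    (σ : Equiv.Perm (Fin p)) :
    Form3IntFeasible n p M D adj (z ∘ σ) (y ∘ σ) (T ∘ σ) (x ∘ σ) :=
  ⟨h.1.comp_perm σ, fun q => h.2.1 (σ q), fun q => h.2.2 (σ q)⟩

end PatternPermutation

theorem form3_symmetry_elimination_valid_general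
    (n p M : ℕ)
    (D : Fin n → ℕ)
    (adj : Fin n → Fin n → Prop)
    (z : Fin p → ℝ) (y : Fin p → Fin n → ℝ) (T : Fin p → ℝ) (x : Fin p → Fin n → ℝ)
    (hfeas : Form3IntFeasible n p M D adj z y T x) :
    ∃ (z' : Fin p → ℝ) (y' : Fin p → Fin n → ℝ) (T' : Fin p → ℝ) (x' : Fin p → Fin n → ℝ),
      Form3IntFeasible n p M D adj z' y' T' x' ∧
      (∑ q : Fin p, z' q = ∑ q : Fin p, z q) ∧
      (∀ q q' : Fin p, q ≤ q' → T' q ≤ T' q') :=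
  ⟨z ∘ Tuple.sort T, y ∘ Tuple.sort T, T ∘ Tuple.sort T, x ∘ Tuple.sort T,
    hfeas.comp_perm _, Equiv.sum_comp _ z, fun _ _ => (Tuple.monotone_sort T ·)⟩

/-- Validity of the symmetry-elimination constraints: every integer-feasible solution of
Formulation 3 can be reordered so that the dwell times are nondecreasing, keeping the
same objective value. -/
theorem form3_symmetry_elimination_valid
    (n p M : ℕ) (hn : 1 ≤ n) (hp : 2 ≤ p) (hM : 1 ≤ M)
    (D : Fin n → ℕ) (hD : ∀ b, D b ≤ M)
    (adj : Fin n → Fin n → Prop) (hadjSymm : Symmetric adj) (hadjIrrefl : Irreflexive adj)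
    (z : Fin p → ℝ) (y : Fin p → Fin n → ℝ) (T : Fin p → ℝ) (x : Fin p → Fin n → ℝ)
    (hfeas : Form3IntFeasible n p M D adj z y T x) :
    ∃ (z' : Fin p → ℝ) (y' : Fin p → Fin n → ℝ) (T' : Fin p → ℝ) (x' : Fin p → Fin n → ℝ),
      Form3IntFeasible n p M D adj z' y' T' x' ∧
      (∑ q : Fin p, z' q = ∑ q : Fin p, z q) ∧
      (∀ q q' : Fin p, q ≤ q' → T' q ≤ T' q') :=
  form3_symmetry_elimination_valid_general n p M D adj z y T x hfeas
end
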